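/- Let σ be a positive definite density matrix and ξ a Hermitian matrix with -σ ⪯ ξ ⪯ σ. Define R_σ[ξ] = ∫₀^∞ (σ+zI)⁻¹ ξ (σ+zI)⁻¹ ξ (σ+zI)⁻¹ dz. Then 0 ⪯ R_σ[ξ] ⪯ I. -/

import Mathlib

/-!
For `z > 0` put `A = (σ + z)⁻¹`. As `σ ≤ σ + z`, antitonicity of the operator inverse and
`-σ ≤ ξ ≤ σ` give `0 ≤ ξ A ξ ≤ ξ σ⁻¹ ξ ≤ σ`, hence `0 ≤ A ξ A ξ A ≤ A σ A` for every `z`.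
Integration preserves the Loewner order, and `∫₀^∞ A σ A dz = 1`: in an eigenbasis of `σ` this is
`∫₀^∞ λ / (λ + z)² dz = 1` for each eigenvalue `λ > 0`. The same diagonalisation writes the entries
of the integrand as combinations of `(λ + z)⁻¹ (λ' + z)⁻¹ (λ'' + z)⁻¹`, so they are integrable.
-/

open Matrix BigOperators MeasureTheory
open scoped ComplexOrder

/-- The map `R_σ[ξ] = ∫₀^∞ (σ+zI)⁻¹ ξ (σ+zI)⁻¹ ξ (σ+zI)⁻¹ dz`, defined entrywise. -/
noncomputable def Rmap {n : Type*} [Fintype n] [DecidableEq n]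
    (σ ξ : Matrix n n ℂ) : Matrix n n ℂ :=
  Matrix.of fun i j =>
    ∫ z in Set.Ioi (0 : ℝ),
      ((σ + (z : ℂ) • 1)⁻¹ * ξ * (σ + (z : ℂ) • 1)⁻¹ * ξ * (σ + (z : ℂ) • 1)⁻¹) i j

open Set
open scoped MatrixOrder

noncomputable def entrywiseIntegral {α 𝕜 m n : Type*} [MeasurableSpace α] [RCLike 𝕜]
    (M : α → Matrix m n 𝕜) (μ : Measure α) : Matrix m n 𝕜 :=
  Matrix.of fun i j => ∫ a, M a i j ∂μ

section EntrywiseIntegral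

variable {α 𝕜 l m n p : Type*} [MeasurableSpace α] [RCLike 𝕜] {μ : Measure α}

theorem integrable_dotProduct_mulVec [Fintype m] [Fintype n] {M : α → Matrix m n 𝕜}
    (hM : ∀ i j, Integrable (fun a => M a i j) μ) (v : m → 𝕜) (w : n → 𝕜) :
    Integrable (fun a => v ⬝ᵥ (M a *ᵥ w)) μ := by
  simp only [dotProduct, mulVec, Finset.mul_sum]
  exact integrable_finsetSum _ fun i _ => integrable_finsetSum _ fun j _ =>
    ((hM i j).mul_const (w j)).const_mul (v i)

theorem dotProduct_entrywiseIntegral_mulVec [Fintype m] [Fintype n] {M : α → Matrix m n 𝕜}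
    (hM : ∀ i j, Integrable (fun a => M a i j) μ) (v : m → 𝕜) (w : n → 𝕜) :
    v ⬝ᵥ (entrywiseIntegral M μ *ᵥ w) = ∫ a, v ⬝ᵥ (M a *ᵥ w) ∂μ := by
  simp only [dotProduct, mulVec, entrywiseIntegral, of_apply, Finset.mul_sum]
  rw [integral_finsetSum _ fun i _ => integrable_finsetSum _ fun j _ =>
    ((hM i j).mul_const (w j)).const_mul (v i)]
  refine Finset.sum_congr rfl fun i _ => ?_
  rw [integral_finsetSum _ fun j _ => ((hM i j).mul_const (w j)).const_mul (v i)]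
  simp only [integral_const_mul, integral_mul_const]

theorem mul_mul_apply_eq_dotProduct_mulVec [Fintype m] [Fintype n] (A : Matrix l m 𝕜)
    (M : Matrix m n 𝕜) (B : Matrix n p 𝕜) (i : l) (j : p) :
    (A * M * B) i j = A i ⬝ᵥ (M *ᵥ fun k => B k j) := by
  simp only [mul_apply, dotProduct, mulVec, Finset.sum_mul, Finset.mul_sum, mul_assoc]
  exact Finset.sum_comm

theorem integrable_mul_mul_apply [Fintype m] [Fintype n] {M : α → Matrix m n 𝕜}
    (hM : ∀ i j, Integrable (fun a => M a i j) μ) (A : Matrix l m 𝕜) (B : Matrix n p 𝕜)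
    (i : l) (j : p) : Integrable (fun a => (A * M a * B) i j) μ := by
  simp only [mul_mul_apply_eq_dotProduct_mulVec]
  exact integrable_dotProduct_mulVec hM _ _

theorem entrywiseIntegral_mul_mul [Fintype m] [Fintype n] {M : α → Matrix m n 𝕜}
    (hM : ∀ i j, Integrable (fun a => M a i j) μ) (A : Matrix l m 𝕜) (B : Matrix n p 𝕜) :
    entrywiseIntegral (fun a => A * M a * B) μ = A * entrywiseIntegral M μ * B := by
  ext i j
  rw [mul_mul_apply_eq_dotProduct_mulVec, dotProduct_entrywiseIntegral_mulVec hM]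
  simp only [entrywiseIntegral, of_apply, mul_mul_apply_eq_dotProduct_mulVec]

theorem entrywiseIntegral_congr_ae {M N : α → Matrix m n 𝕜} (h : M =ᵐ[μ] N) :
    entrywiseIntegral M μ = entrywiseIntegral N μ := by
  ext i j
  exact integral_congr_ae (h.mono fun a ha => congrFun (congrFun ha i) j)

theorem entrywiseIntegral_sub {M N : α → Matrix m n 𝕜}
    (hM : ∀ i j, Integrable (fun a => M a i j) μ) (hN : ∀ i j, Integrable (fun a => N a i j) μ) :
    entrywiseIntegral (fun a => M a - N a) μ = entrywiseIntegral M μ - entrywiseIntegral N μ := by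
  ext i j
  exact integral_sub (hM i j) (hN i j)

theorem integrable_diagonal_apply [DecidableEq n] {f : α → n → 𝕜}
    (hf : ∀ i, Integrable (fun a => f a i) μ) (i j : n) :
    Integrable (fun a => diagonal (f a) i j) μ := by
  rcases eq_or_ne i j with rfl | hij
  · simpa using hf i
  · simp [hij]

theorem entrywiseIntegral_diagonal [DecidableEq n] (f : α → n → 𝕜) :
    entrywiseIntegral (fun a => diagonal (f a)) μ = diagonal fun i => ∫ a, f a i ∂μ := by
  ext i j
  rcases eq_or_ne i j with rfl | hij
  · simp [entrywiseIntegral]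
  · simp [entrywiseIntegral, hij]

theorem posSemidef_entrywiseIntegral [Fintype n] {M : α → Matrix n n 𝕜}
    (hM : ∀ i j, Integrable (fun a => M a i j) μ) (hpos : ∀ᵐ a ∂μ, (M a).PosSemidef) :
    (entrywiseIntegral M μ).PosSemidef := by
  refine .of_dotProduct_mulVec_nonneg ?_ fun x => ?_
  · ext i j
    simp only [conjTranspose_apply, entrywiseIntegral, of_apply, RCLike.star_def,
      ← integral_conj]
    refine integral_congr_ae ?_
    filter_upwards [hpos] with a ha
    exact ha.isHermitian.apply i j
  · rw [dotProduct_entrywiseIntegral_mulVec hM]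
    exact integral_nonneg_of_ae (hpos.mono fun a ha => ha.dotProduct_mulVec_nonneg x)

end EntrywiseIntegral

section ScalarIntegrals

open Filter Topology

theorem hasDerivAt_neg_inv_add {a z : ℝ} (ha : 0 < a) (hz : 0 ≤ z) :
    HasDerivAt (fun t => -(a + t)⁻¹) ((a + z) ^ 2)⁻¹ z := by
  have := (((hasDerivAt_id z).const_add a).inv (by positivity)).neg
  rwa [id, neg_div, neg_neg, one_div] at this

theorem tendsto_neg_inv_add_atTop (a : ℝ) :
    Tendsto (fun t => -(a + t)⁻¹) atTop (𝓝 0) := by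
  simpa using (tendsto_atTop_add_const_left _ a tendsto_id).inv_tendsto_atTop.neg

theorem integrableOn_Ioi_inv_add_sq {a : ℝ} (ha : 0 < a) :
    IntegrableOn (fun z => ((a + z) ^ 2)⁻¹) (Ioi 0) :=
  integrableOn_Ioi_deriv_of_nonneg' (fun _ hz => hasDerivAt_neg_inv_add ha hz)
    (fun _ _ => by positivity) (tendsto_neg_inv_add_atTop a)

theorem integral_Ioi_inv_add_sq {a : ℝ} (ha : 0 < a) :
    ∫ z in Ioi (0 : ℝ), ((a + z) ^ 2)⁻¹ = a⁻¹ := by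
  rw [integral_Ioi_of_hasDerivAt_of_nonneg' (fun _ hz => hasDerivAt_neg_inv_add ha hz)
    (fun _ _ => by positivity) (tendsto_neg_inv_add_atTop a)]
  simp

theorem integrableOn_Ioi_inv_add_mul_inv_add_mul_inv_add {a b c : ℝ} (ha : 0 < a) (hb : 0 < b)
    (hc : 0 < c) : IntegrableOn (fun z => (a + z)⁻¹ * (b + z)⁻¹ * (c + z)⁻¹) (Ioi 0) := by
  have hm : 0 < min a c := lt_min ha hc
  refine ((integrableOn_Ioi_inv_add_sq hm).const_mul b⁻¹).mono' (by fun_prop) ?_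
  filter_upwards [ae_restrict_mem measurableSet_Ioi] with z (hz : 0 < z)
  rw [Real.norm_of_nonneg (by positivity)]
  calc (a + z)⁻¹ * (b + z)⁻¹ * (c + z)⁻¹ ≤ (min a c + z)⁻¹ * b⁻¹ * (min a c + z)⁻¹ := by
        gcongr
        exacts [min_le_left a c, by linarith, min_le_right a c]
    _ = b⁻¹ * ((min a c + z) ^ 2)⁻¹ := by rw [← inv_pow]; ring

end ScalarIntegrals

section LoewnerOrder

theorem Matrix.isSelfAdjoint_of_le {𝕜 n : Type*} [RCLike 𝕜] {σ ξ : Matrix n n 𝕜}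
    (hσ : IsSelfAdjoint σ) (h : ξ ≤ σ) : IsSelfAdjoint ξ := by
  simpa using hσ.sub (le_iff.mp h).isHermitian

variable {𝕜 n : Type*} [RCLike 𝕜] [Fintype n] [DecidableEq n]

open scoped Matrix.Norms.L2Operator in
theorem Matrix.PosDef.inv_anti {A B : Matrix n n ℂ} (hA : A.PosDef) (hAB : A ≤ B) :
    B⁻¹ ≤ A⁻¹ := by
  rw [nonsing_inv_eq_ringInverse, nonsing_inv_eq_ringInverse]
  exact CStarAlgebra.ringInverse_le_ringInverse hAB hA.isStrictlyPositive

/-- Both terms of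
`2 (σ - ξ σ⁻¹ ξ) = (σ - ξ) σ⁻¹ (σ + ξ) σ⁻¹ (σ - ξ) + (σ + ξ) σ⁻¹ (σ - ξ) σ⁻¹ (σ + ξ)`
are congruent to `σ + ξ ≥ 0`, resp. `σ - ξ ≥ 0`. -/
theorem Matrix.mul_inv_mul_le_of_neg_le_of_le {σ ξ : Matrix n n 𝕜} (hσ : σ.PosDef)
    (h₁ : -σ ≤ ξ) (h₂ : ξ ≤ σ) : ξ * σ⁻¹ * ξ ≤ σ := by
  set P := σ⁻¹
  have hdet : IsUnit σ.det := (isUnit_iff_isUnit_det σ).mp hσ.isUnit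
  have hσP : σ * P = 1 := mul_nonsing_inv σ hdet
  have hPσ : P * σ = 1 := nonsing_inv_mul σ hdet
  have hP : IsSelfAdjoint P := hσ.inv.isHermitian
  have hξ : IsSelfAdjoint ξ := isSelfAdjoint_of_le hσ.isHermitian h₂
  have hminus : 0 ≤ σ - ξ := sub_nonneg.mpr h₂
  have hplus : 0 ≤ σ + ξ := by simpa [add_comm] using sub_nonneg.mpr h₁
  have hcross₁ : (σ - ξ) * P * (σ + ξ) = σ - ξ * P * ξ := by
    rw [sub_mul, sub_mul, mul_add, mul_add, hσP, one_mul, one_mul, mul_assoc ξ P σ, hPσ, mul_one]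
    abel
  have hcross₂ : (σ + ξ) * P * (σ - ξ) = σ - ξ * P * ξ := by
    rw [add_mul, add_mul, mul_sub, mul_sub, hσP, one_mul, one_mul, mul_assoc ξ P σ, hPσ, mul_one]
    abel
  have hsum : (σ - ξ) * P * (σ + ξ) * P * (σ - ξ) + (σ + ξ) * P * (σ - ξ) * P * (σ + ξ)
      = (2 : ℝ) • (σ - ξ * P * ξ) := by
    rw [hcross₁, hcross₂, ← mul_add, sub_add_add_cancel, ← two_smul ℝ σ, mul_smul_comm, mul_assoc,
      hPσ, mul_one]
  have hterm₁ : 0 ≤ (σ - ξ) * P * (σ + ξ) * P * (σ - ξ) := by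
    simpa [star_mul, hP.star_eq, (hσ.isHermitian.sub hξ).star_eq, mul_assoc]
      using star_left_conjugate_nonneg hplus (P * (σ - ξ))
  have hterm₂ : 0 ≤ (σ + ξ) * P * (σ - ξ) * P * (σ + ξ) := by
    simpa [star_mul, hP.star_eq, (hσ.isHermitian.add hξ).star_eq, mul_assoc]
      using star_left_conjugate_nonneg hminus (P * (σ + ξ))
  rw [← sub_nonneg, ← inv_smul_smul₀ (two_ne_zero (α := ℝ)) (σ - ξ * P * ξ), ← hsum]
  exact ((hterm₁.posSemidef.add hterm₂.posSemidef).smul (by norm_num)).nonneg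

theorem Matrix.inv_mul_mul_inv_mul_mul_inv_mem_Icc {σ ξ τ : Matrix n n ℂ} (hσ : σ.PosDef)
    (h₁ : -σ ≤ ξ) (h₂ : ξ ≤ σ) (hτ : σ ≤ τ) :
    τ⁻¹ * ξ * τ⁻¹ * ξ * τ⁻¹ ∈ Icc 0 (τ⁻¹ * σ * τ⁻¹) := by
  have hτinv : τ⁻¹.PosDef := by simpa using (hσ.add_posSemidef (le_iff.mp hτ)).inv
  have hξ : IsSelfAdjoint ξ := isSelfAdjoint_of_le hσ.isHermitian h₂
  have hmid : ξ * τ⁻¹ * ξ ∈ Icc 0 σ :=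
    ⟨hξ.conjugate_nonneg hτinv.posSemidef.nonneg,
      (hξ.conjugate_le_conjugate (hσ.inv_anti hτ)).trans (mul_inv_mul_le_of_neg_le_of_le hσ h₁ h₂)⟩
  have hassoc : τ⁻¹ * ξ * τ⁻¹ * ξ * τ⁻¹ = τ⁻¹ * (ξ * τ⁻¹ * ξ) * τ⁻¹ := by simp only [mul_assoc]
  rw [hassoc]
  have hA : IsSelfAdjoint τ⁻¹ := hτinv.isHermitian
  exact ⟨hA.conjugate_nonneg hmid.1, hA.conjugate_le_conjugate hmid.2⟩

end LoewnerOrder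

section Resolvent

variable {n : Type*} [Fintype n] [DecidableEq n]

theorem Matrix.IsHermitian.inv_add_smul_one {σ : Matrix n n ℂ} (hσ : σ.IsHermitian) {z : ℝ}
    (hz : ∀ k, hσ.eigenvalues k + z ≠ 0) :
    (σ + (z : ℂ) • 1)⁻¹ = (hσ.eigenvectorUnitary : Matrix n n ℂ) *
      diagonal (fun k => (((hσ.eigenvalues k + z)⁻¹ : ℝ) : ℂ)) *
      star (hσ.eigenvectorUnitary : Matrix n n ℂ) := by
  set U := (hσ.eigenvectorUnitary : Matrix n n ℂ)
  set d := hσ.eigenvalues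
  have hUU : star U * U = 1 := mem_unitaryGroup_iff'.mp hσ.eigenvectorUnitary.2
  have hUU' : U * star U = 1 := mem_unitaryGroup_iff.mp hσ.eigenvectorUnitary.2
  have hσ' : σ + (z : ℂ) • 1 = U * diagonal (fun k => ((d k + z : ℝ) : ℂ)) * star U := by
    have hspec : σ = U * diagonal (fun k => (d k : ℂ)) * star U := hσ.spectral_theorem
    have hdiag : diagonal (fun k => ((d k + z : ℝ) : ℂ))
        = diagonal (fun k => (d k : ℂ)) + (z : ℂ) • 1 := by
      rw [smul_one_eq_diagonal, diagonal_add]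
      simp
    rw [hspec, hdiag, mul_add, add_mul, mul_smul_comm, mul_one, smul_mul_assoc, hUU']
  apply inv_eq_left_inv
  calc U * diagonal (fun k => (((d k + z)⁻¹ : ℝ) : ℂ)) * star U * (σ + (z : ℂ) • 1)
      = U * (diagonal (fun k => (((d k + z)⁻¹ : ℝ) : ℂ)) * diagonal (fun k => ((d k + z : ℝ) : ℂ)))
        * star U := by
        rw [hσ']
        simp only [mul_assoc, ← mul_assoc (star U) U, hUU, one_mul]
    _ = 1 := by
        simp_rw [diagonal_mul_diagonal, ← Complex.ofReal_mul, inv_mul_cancel₀ (hz _),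
          Complex.ofReal_one]
        rw [← Pi.one_def, diagonal_one', mul_one, hUU']

theorem integrableOn_diagonal_inv_add_sandwich_apply {d : n → ℝ} (hd : ∀ k, 0 < d k)
    (X Y : Matrix n n ℂ) (k l : n) :
    IntegrableOn (fun z : ℝ =>
      (diagonal (fun k => (((d k + z)⁻¹ : ℝ) : ℂ)) * X * diagonal (fun k => (((d k + z)⁻¹ : ℝ) : ℂ))
        * Y * diagonal (fun k => (((d k + z)⁻¹ : ℝ) : ℂ))) k l) (Ioi 0) := by
  have hentry : ∀ z : ℝ, (diagonal (fun k => (((d k + z)⁻¹ : ℝ) : ℂ)) * X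
      * diagonal (fun k => (((d k + z)⁻¹ : ℝ) : ℂ)) * Y
      * diagonal (fun k => (((d k + z)⁻¹ : ℝ) : ℂ))) k l
      = ∑ m, X k m * Y m l * (((d k + z)⁻¹ * (d m + z)⁻¹ * (d l + z)⁻¹ : ℝ) : ℂ) := by
    intro z
    rw [mul_diagonal, mul_apply, Finset.sum_mul]
    refine Finset.sum_congr rfl fun m _ => ?_
    rw [mul_diagonal, diagonal_mul]
    push_cast
    ring
  simp_rw [hentry]
  exact integrable_finsetSum _ fun m _ =>
    ((integrableOn_Ioi_inv_add_mul_inv_add_mul_inv_add (hd k) (hd m) (hd l)).ofReal).const_mul _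

end Resolvent

namespace Matrix.PosDef

variable {n : Type*} [Fintype n] [DecidableEq n] {σ : Matrix n n ℂ}

theorem inv_add_smul_one (hσ : σ.PosDef) {z : ℝ} (hz : 0 ≤ z) :
    (σ + (z : ℂ) • 1)⁻¹ = (hσ.isHermitian.eigenvectorUnitary : Matrix n n ℂ) *
      diagonal (fun k => (((hσ.isHermitian.eigenvalues k + z)⁻¹ : ℝ) : ℂ)) *
      star (hσ.isHermitian.eigenvectorUnitary : Matrix n n ℂ) :=
  hσ.isHermitian.inv_add_smul_one fun k => (add_pos_of_pos_of_nonneg (hσ.eigenvalues_pos k) hz).ne'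

theorem integrableOn_inv_add_smul_one_sandwich_apply (hσ : σ.PosDef) (ξ : Matrix n n ℂ) (i j : n) :
    IntegrableOn (fun z : ℝ =>
      ((σ + (z : ℂ) • 1)⁻¹ * ξ * (σ + (z : ℂ) • 1)⁻¹ * ξ * (σ + (z : ℂ) • 1)⁻¹) i j) (Ioi 0) := by
  set U := (hσ.isHermitian.eigenvectorUnitary : Matrix n n ℂ)
  set η := star U * ξ * U
  refine IntegrableOn.congr_fun (integrable_mul_mul_apply
    (integrableOn_diagonal_inv_add_sandwich_apply hσ.eigenvalues_pos η η) U (star U) i j)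
    (fun z (hz : 0 < z) => ?_) measurableSet_Ioi
  rw [hσ.inv_add_smul_one hz.le]
  simp only [η, mul_assoc]
  rfl

theorem inv_add_smul_one_mul_mul_inv_add_smul_one (hσ : σ.PosDef) {z : ℝ} (hz : 0 ≤ z) :
    (σ + (z : ℂ) • 1)⁻¹ * σ * (σ + (z : ℂ) • 1)⁻¹ =
      (hσ.isHermitian.eigenvectorUnitary : Matrix n n ℂ) *
      diagonal (fun k => ((hσ.isHermitian.eigenvalues k *
        ((hσ.isHermitian.eigenvalues k + z) ^ 2)⁻¹ : ℝ) : ℂ)) *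
      star (hσ.isHermitian.eigenvectorUnitary : Matrix n n ℂ) := by
  rw [hσ.inv_add_smul_one hz]
  set U := (hσ.isHermitian.eigenvectorUnitary : Matrix n n ℂ)
  set d := hσ.isHermitian.eigenvalues
  have hdiag : star U * σ * U = diagonal (fun k => (d k : ℂ)) := by
    have h := hσ.isHermitian.conjStarAlgAut_star_eigenvectorUnitary
    rwa [Unitary.conjStarAlgAut_star_apply] at h
  calc U * diagonal (fun k => (((d k + z)⁻¹ : ℝ) : ℂ)) * star U * σ
        * (U * diagonal (fun k => (((d k + z)⁻¹ : ℝ) : ℂ)) * star U)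
      = U * (diagonal (fun k => (((d k + z)⁻¹ : ℝ) : ℂ)) * (star U * σ * U)
        * diagonal (fun k => (((d k + z)⁻¹ : ℝ) : ℂ))) * star U := by simp only [mul_assoc]
    _ = _ := by
      rw [hdiag, diagonal_mul_diagonal, diagonal_mul_diagonal]
      congr 3 with k
      push_cast
      rw [← inv_pow]
      ring

theorem integrableOn_diagonal_eigenvalues_mul_inv_add_sq_apply (hσ : σ.PosDef) (k l : n) :
    IntegrableOn (fun z : ℝ => diagonal (fun k => ((hσ.isHermitian.eigenvalues k *
      ((hσ.isHermitian.eigenvalues k + z) ^ 2)⁻¹ : ℝ) : ℂ)) k l) (Ioi 0) :=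
  integrable_diagonal_apply (fun k =>
    ((integrableOn_Ioi_inv_add_sq (hσ.eigenvalues_pos k)).const_mul _).ofReal) k l

theorem integrableOn_inv_add_smul_one_mul_mul_inv_add_smul_one_apply (hσ : σ.PosDef) (i j : n) :
    IntegrableOn (fun z : ℝ => ((σ + (z : ℂ) • 1)⁻¹ * σ * (σ + (z : ℂ) • 1)⁻¹) i j) (Ioi 0) :=
  IntegrableOn.congr_fun (integrable_mul_mul_apply
    (integrableOn_diagonal_eigenvalues_mul_inv_add_sq_apply hσ) _ _ i j)
    (fun z (hz : 0 < z) => by rw [hσ.inv_add_smul_one_mul_mul_inv_add_smul_one hz.le])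
    measurableSet_Ioi

theorem entrywiseIntegral_inv_add_smul_one_mul_mul_inv_add_smul_one (hσ : σ.PosDef) :
    entrywiseIntegral (fun z : ℝ => (σ + (z : ℂ) • 1)⁻¹ * σ * (σ + (z : ℂ) • 1)⁻¹)
      (volume.restrict (Ioi 0)) = 1 := by
  rw [entrywiseIntegral_congr_ae ((ae_restrict_mem measurableSet_Ioi).mono
      fun z (hz : 0 < z) => hσ.inv_add_smul_one_mul_mul_inv_add_smul_one hz.le),
    entrywiseIntegral_mul_mul (integrableOn_diagonal_eigenvalues_mul_inv_add_sq_apply hσ),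
    entrywiseIntegral_diagonal]
  simp_rw [integral_complex_ofReal, integral_const_mul,
    integral_Ioi_inv_add_sq (hσ.eigenvalues_pos _), mul_inv_cancel₀ (hσ.eigenvalues_pos _).ne',
    Complex.ofReal_one]
  rw [← Pi.one_def, diagonal_one', mul_one,
    mem_unitaryGroup_iff.mp hσ.isHermitian.eigenvectorUnitary.2]

end Matrix.PosDef

theorem Rmap_loewner_bounded_general
    {n : Type*} [Fintype n] [DecidableEq n]
    (σ : Matrix n n ℂ) (hσ : σ.PosDef)
    (ξ : Matrix n n ℂ)
    (h₁ : (σ - ξ).PosSemidef) (h₂ : (ξ + σ).PosSemidef) :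
    (Rmap σ ξ).PosSemidef ∧ ((1 : Matrix n n ℂ) - Rmap σ ξ).PosSemidef := by
  have hneg : -σ ≤ ξ := by rwa [le_iff, sub_neg_eq_add]
  have hbounds : ∀ᵐ z : ℝ ∂(volume.restrict (Ioi (0 : ℝ))),
      (σ + (z : ℂ) • 1)⁻¹ * ξ * (σ + (z : ℂ) • 1)⁻¹ * ξ * (σ + (z : ℂ) • 1)⁻¹ ∈
        Icc 0 ((σ + (z : ℂ) • 1)⁻¹ * σ * (σ + (z : ℂ) • 1)⁻¹) := by
    filter_upwards [ae_restrict_mem measurableSet_Ioi] with z (hz : 0 < z)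
    refine inv_mul_mul_inv_mul_mul_inv_mem_Icc hσ hneg (le_iff.mpr h₁) (le_add_of_nonneg_right ?_)
    exact (PosSemidef.one.smul (Complex.zero_le_real.mpr hz.le)).nonneg
  have hM := hσ.integrableOn_inv_add_smul_one_sandwich_apply ξ
  have hB := hσ.integrableOn_inv_add_smul_one_mul_mul_inv_add_smul_one_apply
  have hR : Rmap σ ξ = entrywiseIntegral (fun z : ℝ =>
      (σ + (z : ℂ) • 1)⁻¹ * ξ * (σ + (z : ℂ) • 1)⁻¹ * ξ * (σ + (z : ℂ) • 1)⁻¹)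
      (volume.restrict (Ioi 0)) := rfl
  rw [hR]
  refine ⟨posSemidef_entrywiseIntegral hM (hbounds.mono fun z hz => hz.1.posSemidef), ?_⟩
  nth_rw 1 [← hσ.entrywiseIntegral_inv_add_smul_one_mul_mul_inv_add_smul_one]
  rw [← entrywiseIntegral_sub hB hM]
  exact posSemidef_entrywiseIntegral (fun i j => (hB i j).sub (hM i j))
    (hbounds.mono fun z hz => le_iff.mp hz.2)

/-- If `σ` is a positive definite density matrix and `-σ ⪯ ξ ⪯ σ`, then
`0 ⪯ R_σ[ξ] ⪯ I`. -/
theorem Rmap_loewner_bounded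
    {n : Type*} [Fintype n] [DecidableEq n]
    (σ : Matrix n n ℂ) (hσ : σ.PosDef) (htr : σ.trace = 1)
    (ξ : Matrix n n ℂ) (hξ : ξ.IsHermitian)
    (h₁ : (σ - ξ).PosSemidef) (h₂ : (ξ + σ).PosSemidef) :
    (Rmap σ ξ).PosSemidef ∧ ((1 : Matrix n n ℂ) - Rmap σ ξ).PosSemidef :=
  Rmap_loewner_bounded_general σ hσ ξ h₁ h₂
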